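/- For r > 0 and θ ∈ [0,π], the quaternionic matrix g = [[0, j],[j, 0]] satisfies g·A·g⁻¹ = A⁻¹, where A = diag(r·e^{iθ}, r⁻¹·e^{iθ}). In particular A is reversible in SL(2,ℍ) via a skew-involution (g² = -I). -/

import Mathlib

/-- The quaternion `cos θ + (sin θ) i`, i.e. `e^{iθ}` inside the quaternions. -/
noncomputable def eI (θ : ℝ) : Quaternion ℝ := ⟨Real.cos θ, Real.sin θ, 0, 0⟩

/-- The quaternion unit `j`. -/
def qj : Quaternion ℝ := ⟨0, 0, 1, 0⟩

/-- The standard complex embedding `Φ` of a 2×2 quaternionic matrix `A = A₁ + A₂ j`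
as the 4×4 complex block matrix `[[A₁, A₂], [-conj A₂, conj A₁]]`. -/
noncomputable def Phi (A : Matrix (Fin 2) (Fin 2) (Quaternion ℝ)) :
    Matrix (Fin 2 ⊕ Fin 2) (Fin 2 ⊕ Fin 2) ℂ :=
  Matrix.fromBlocks
    (A.map fun q => (⟨q.re, q.imI⟩ : ℂ))
    (A.map fun q => (⟨q.imJ, q.imK⟩ : ℂ))
    (-(A.map fun q => (⟨q.imJ, -q.imK⟩ : ℂ)))
    (A.map fun q => (⟨q.re, -q.imI⟩ : ℂ))

/-- The quaternionic determinant: the determinant of the complex embedding. -/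
noncomputable def detH (A : Matrix (Fin 2) (Fin 2) (Quaternion ℝ)) : ℂ := (Phi A).det

/-!
Both matrices are diagonal with entries of the form `s e^{iφ}`, `s` real, so the inverse
relations follow from `e^{iφ} e^{iψ} = e^{i(φ+ψ)}` and the centrality of real scalars. For the
conjugation, `j z = z̄ j` for `z` in `ℂ ⊂ ℍ` and `j² = -1` give `j (s e^{iθ}) j = -s e^{-iθ}`,
while conjugating by the antidiagonal `g` swaps the two diagonal entries.
-/

open scoped Quaternion

section FinTwo

variable {R : Type*} [Ring R]

theorem fin_two_diag_mul_diag_eq_one {a b c d : R} (hac : a * c = 1) (hbd : b * d = 1) :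
    !![a, 0; 0, b] * !![c, 0; 0, d] = 1 := by
  rw [Matrix.mul_fin_two, Matrix.one_fin_two]
  simp [hac, hbd]

theorem fin_two_antidiag_mul_self {g : R} (hg : g * g = -1) :
    !![0, g; g, 0] * !![0, g; g, 0] = -1 := by
  ext i j
  fin_cases i <;> fin_cases j <;> simp [hg]

theorem fin_two_antidiag_mul_diag_mul_neg_antidiag (g a b : R) :
    !![0, g; g, 0] * !![a, 0; 0, b] * -!![0, g; g, 0] =
      !![-(g * b * g), 0; 0, -(g * a * g)] := by
  ext i j
  fin_cases i <;> fin_cases j <;> simp [Matrix.mul_apply, mul_assoc]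

end FinTwo

@[simp] theorem eI_re (θ : ℝ) : (eI θ).re = Real.cos θ := rfl
@[simp] theorem eI_imI (θ : ℝ) : (eI θ).imI = Real.sin θ := rfl
@[simp] theorem eI_imJ (θ : ℝ) : (eI θ).imJ = 0 := rfl
@[simp] theorem eI_imK (θ : ℝ) : (eI θ).imK = 0 := rfl

@[simp] theorem qj_re : qj.re = 0 := rfl
@[simp] theorem qj_imI : qj.imI = 0 := rfl
@[simp] theorem qj_imJ : qj.imJ = 1 := rfl
@[simp] theorem qj_imK : qj.imK = 0 := rfl

theorem eI_zero : eI 0 = 1 := by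
  ext <;> simp

theorem eI_add (φ ψ : ℝ) : eI (φ + ψ) = eI φ * eI ψ := by
  ext <;> simp [Real.cos_add, Real.sin_add, add_comm]

theorem coe_mul_eI_mul_coe_mul_eI (s t φ ψ : ℝ) :
    ((s : Quaternion ℝ) * eI φ) * ((t : Quaternion ℝ) * eI ψ) =
      ((s * t : ℝ) : Quaternion ℝ) * eI (φ + ψ) := by
  rw [eI_add, Quaternion.coe_mul, mul_assoc, ← mul_assoc (eI φ), ← Quaternion.coe_commutes t,
    mul_assoc, mul_assoc]

theorem coe_mul_eI_mul_coe_mul_eI_eq_one {s t φ ψ : ℝ} (hst : s * t = 1) (hφψ : φ + ψ = 0) :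
    ((s : Quaternion ℝ) * eI φ) * ((t : Quaternion ℝ) * eI ψ) = 1 := by
  rw [coe_mul_eI_mul_coe_mul_eI, hst, hφψ, eI_zero, Quaternion.coe_one, one_mul]

theorem qj_mul_qj : qj * qj = -1 := by
  ext <;> simp

theorem qj_mul_eI (θ : ℝ) : qj * eI θ = eI (-θ) * qj := by
  ext <;> simp

theorem qj_mul_coe_mul_eI_mul_qj (s θ : ℝ) :
    qj * ((s : Quaternion ℝ) * eI θ) * qj = -((s : Quaternion ℝ) * eI (-θ)) := by
  rw [← mul_assoc, ← Quaternion.coe_commutes, mul_assoc, mul_assoc, ← mul_assoc qj, qj_mul_eI,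
    mul_assoc, qj_mul_qj, mul_neg_one, mul_neg]

theorem diag_same_angle_reversible_general (r θ : ℝ) (hr : 0 < r) :
    !![(r : Quaternion ℝ) * eI θ, 0; 0, ((r⁻¹ : ℝ) : Quaternion ℝ) * eI θ] *
        !![((r⁻¹ : ℝ) : Quaternion ℝ) * eI (-θ), 0; 0, (r : Quaternion ℝ) * eI (-θ)] = 1 ∧
      !![((r⁻¹ : ℝ) : Quaternion ℝ) * eI (-θ), 0; 0, (r : Quaternion ℝ) * eI (-θ)] *
        !![(r : Quaternion ℝ) * eI θ, 0; 0, ((r⁻¹ : ℝ) : Quaternion ℝ) * eI θ] = 1 ∧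
      !![(0 : Quaternion ℝ), qj; qj, 0] * !![(0 : Quaternion ℝ), qj; qj, 0] = -1 ∧
      !![(0 : Quaternion ℝ), qj; qj, 0] *
          !![(r : Quaternion ℝ) * eI θ, 0; 0, ((r⁻¹ : ℝ) : Quaternion ℝ) * eI θ] *
          (-(!![(0 : Quaternion ℝ), qj; qj, 0])) =
        !![((r⁻¹ : ℝ) : Quaternion ℝ) * eI (-θ), 0; 0, (r : Quaternion ℝ) * eI (-θ)] := by
  have hrr : r * r⁻¹ = 1 := mul_inv_cancel₀ hr.ne'
  have hrr' : r⁻¹ * r = 1 := inv_mul_cancel₀ hr.ne'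
  refine ⟨fin_two_diag_mul_diag_eq_one ?_ ?_, fin_two_diag_mul_diag_eq_one ?_ ?_,
    fin_two_antidiag_mul_self qj_mul_qj, ?_⟩
  · exact coe_mul_eI_mul_coe_mul_eI_eq_one hrr (add_neg_cancel θ)
  · exact coe_mul_eI_mul_coe_mul_eI_eq_one hrr' (add_neg_cancel θ)
  · exact coe_mul_eI_mul_coe_mul_eI_eq_one hrr' (neg_add_cancel θ)
  · exact coe_mul_eI_mul_coe_mul_eI_eq_one hrr (neg_add_cancel θ)
  · rw [fin_two_antidiag_mul_diag_mul_neg_antidiag, qj_mul_coe_mul_eI_mul_qj,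
      qj_mul_coe_mul_eI_mul_qj, neg_neg, neg_neg]

/-- g = [[0,j],[j,0]] conjugates A = diag(r e^{iθ}, r⁻¹ e^{iθ}) to
A⁻¹ = diag(r⁻¹ e^{-iθ}, r e^{-iθ}); moreover g² = -1 (so g⁻¹ = -g): A is reversible in
SL(2,ℍ) via a skew-involution. -/
theorem diag_same_angle_reversible (r θ : ℝ) (hr : 0 < r) (hθ : θ ∈ Set.Icc 0 Real.pi) :
    !![(r : Quaternion ℝ) * eI θ, 0; 0, ((r⁻¹ : ℝ) : Quaternion ℝ) * eI θ] *
        !![((r⁻¹ : ℝ) : Quaternion ℝ) * eI (-θ), 0; 0, (r : Quaternion ℝ) * eI (-θ)] = 1 ∧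
      !![((r⁻¹ : ℝ) : Quaternion ℝ) * eI (-θ), 0; 0, (r : Quaternion ℝ) * eI (-θ)] *
        !![(r : Quaternion ℝ) * eI θ, 0; 0, ((r⁻¹ : ℝ) : Quaternion ℝ) * eI θ] = 1 ∧
      !![(0 : Quaternion ℝ), qj; qj, 0] * !![(0 : Quaternion ℝ), qj; qj, 0] = -1 ∧
      !![(0 : Quaternion ℝ), qj; qj, 0] *
          !![(r : Quaternion ℝ) * eI θ, 0; 0, ((r⁻¹ : ℝ) : Quaternion ℝ) * eI θ] *
          (-(!![(0 : Quaternion ℝ), qj; qj, 0])) =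
        !![((r⁻¹ : ℝ) : Quaternion ℝ) * eI (-θ), 0; 0, (r : Quaternion ℝ) * eI (-θ)] :=
  diag_same_angle_reversible_general r θ hr
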